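/- arXiv:2205.07010 — 2 statements merged into one kernel-verified Lean document; each statement's English description precedes it below -/
import Mathlib

section
/- Let G be a bipartite graph with a unique perfect matching M, and let u, v be vertices of G. If P is a co-augmenting path between u and v, then the graph G \ P obtained by deleting all vertices of P is a bipartite graph with the unique perfect matching M \ P (the matching edges of M not incident to vertices of P). -/
open SimpleGraph
open scoped Classical

noncomputable section

variable {V : Type*}

structure MixedGraph (V : Type*) where
  digon : V → V → Prop
  arc : V → V → Prop
  digon_symm : ∀ u v, digon u v → digon v u
  digon_irrefl : ∀ v, ¬ digon v v
  arc_irrefl : ∀ v, ¬ arc v v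
  arc_asymm : ∀ u v, arc u v → ¬ arc v u
  digon_arc : ∀ u v, digon u v → ¬ arc u v ∧ ¬ arc v u

def MixedGraph.underlying (X : MixedGraph V) : SimpleGraph V where
  Adj u v := X.digon u v ∨ X.arc u v ∨ X.arc v u
  symm := by
    constructor
    intro u v h
    rcases h with h | h | h
    · exact Or.inl (X.digon_symm u v h)
    · exact Or.inr (Or.inr h)
    · exact Or.inr (Or.inl h)
  loopless := by
    constructor
    intro v h
    rcases h with h | h | h
    · exact X.digon_irrefl v h
    · exact X.arc_irrefl v h
    · exact X.arc_irrefl v h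

/-- The α-hermitian adjacency matrix of a mixed graph. -/
def Halpha (X : MixedGraph V) (α : ℂ) : Matrix V V ℂ := fun u v =>
  if X.digon u v then 1
  else if X.arc u v then α
  else if X.arc v u then (starRingEnd ℂ) α
  else 0

/-- The value h_α of a walk: product of matrix entries along consecutive vertices. -/
def hWalk (X : MixedGraph V) (α : ℂ) {u v : V} (p : X.underlying.Walk u v) : ℂ :=
  (p.darts.map (fun d => Halpha X α d.toProd.1 d.toProd.2)).prod

/-- A co-augmenting path w.r.t. a matching edge set `M`: a path whose edges alternate
matching / non-matching, beginning and ending with matching edges. -/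
def IsCoAugmenting (G : SimpleGraph V) (M : Set (Sym2 V)) {u v : V} (p : G.Walk u v) : Prop :=
  p.IsPath ∧ Odd p.edges.length ∧
    ∀ i : Fin p.edges.length, (p.edges.get i ∈ M ↔ Even i.val)

/-- `G` is unicyclic: connected with exactly one cycle (all cycles have the same edge set). -/
def IsUnicyclic (G : SimpleGraph V) : Prop :=
  G.Connected ∧ (∃ (u : V) (c : G.Walk u u), c.IsCycle) ∧
    ∀ (u v : V) (c : G.Walk u u) (d : G.Walk v v), c.IsCycle → d.IsCycle →
      {e | e ∈ c.edges} = {e | e ∈ d.edges}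

/-- A peg: a matching edge incident to a vertex of the cycle `c` but not an edge of `c`. -/
def IsPeg (G : SimpleGraph V) (M : G.Subgraph) {u : V} (c : G.Walk u u) (e : Sym2 V) : Prop :=
  e ∈ M.edgeSet ∧ e ∉ c.edges ∧ ∃ x ∈ c.support, x ∈ e

/-- Restriction of a matching to an induced subgraph. -/
def restrictMatching (G : SimpleGraph V) (M : G.Subgraph) (s : Set V) :
    (G.induce s).Subgraph where
  verts := Set.univ
  Adj a b := M.Adj a.1 b.1
  adj_sub h := M.adj_sub h
  edge_vert _ := Set.mem_univ _
  symm := ⟨fun _ _ h => M.symm.symm _ _ h⟩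

/-- The sign `f_W` at the end of a walk: starts at 1 and flips across non-matching edges. -/
def fEnd (G : SimpleGraph V) (M : Set (Sym2 V)) : ∀ {u v : V}, G.Walk u v → ℤ
  | _, _, SimpleGraph.Walk.nil => 1
  | _, _, @SimpleGraph.Walk.cons _ _ u w _ _ p =>
      if s(u, w) ∈ M then fEnd G M p else - fEnd G M p

end

/-! Every vertex of a co-augmenting path `P` is matched by `M` to a vertex of `P`, so `M` splits
into a perfect matching of `P` and one of `G \ P`. Conversely, any perfect matching of `G \ P`
together with `M` on `P` is a perfect matching of `G`, hence equals `M` by uniqueness. -/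

namespace SimpleGraph

variable {V : Type*} {G : SimpleGraph V}

lemma Walk.exists_mem_support_adj_of_odd_length {M : G.Subgraph} {u v : V} (p : G.Walk u v)
    (hodd : Odd p.length)
    (heven : ∀ i (hi : i < p.edges.length), Even i → p.edges[i] ∈ M.edgeSet) :
    ∀ x ∈ p.support, ∃ y ∈ p.support, M.Adj x y := by
  intro x hx
  obtain ⟨n, rfl, hn⟩ := Walk.mem_support_iff_exists_getVert.mp hx
  rcases Nat.even_or_odd n with hn_even | ⟨k, rfl⟩
  · have hlt : n < p.length :=
      lt_of_le_of_ne hn fun h => Nat.not_even_iff_odd.mpr hodd (h ▸ hn_even)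
    have hedge := heven n (by simpa using hlt) hn_even
    rw [Walk.getElem_edges] at hedge
    exact ⟨_, p.getVert_mem_support _, hedge⟩
  · have hedge := heven (2 * k) (by simp; omega) (even_two_mul k)
    rw [Walk.getElem_edges] at hedge
    exact ⟨_, p.getVert_mem_support _, hedge.symm⟩

lemma Subgraph.IsMatching.mem_iff_of_adj {M : G.Subgraph} (hM : M.IsMatching) {s : Set V}
    (hs : ∀ x ∈ s, ∃ y ∈ s, M.Adj x y) {x y : V} (hxy : M.Adj x y) : x ∈ s ↔ y ∈ s := by
  have closed : ∀ ⦃x y⦄, M.Adj x y → x ∈ s → y ∈ s := fun x y hxy hx => by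
    obtain ⟨z, hz, hxz⟩ := hs x hx
    rwa [hM.eq_of_adj_left hxy hxz]
  exact ⟨closed hxy, closed hxy.symm⟩

lemma Colorable.induce {n : ℕ} (h : G.Colorable n) (s : Set V) : (G.induce s).Colorable n :=
  h.of_hom (Embedding.induce s).toHom

def Subgraph.extendBy {s : Set V} (N : (G.induce s).Subgraph) (M : G.Subgraph) : G.Subgraph where
  verts := Set.univ
  Adj x y := (∃ (hx : x ∈ s) (hy : y ∈ s), N.Adj ⟨x, hx⟩ ⟨y, hy⟩) ∨ (x ∉ s ∧ y ∉ s ∧ M.Adj x y)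
  adj_sub := by
    rintro x y (⟨_, _, h⟩ | ⟨-, -, h⟩)
    exacts [N.adj_sub h, M.adj_sub h]
  edge_vert _ := Set.mem_univ _
  symm := ⟨by
    rintro x y (⟨hx, hy, h⟩ | ⟨hx, hy, h⟩)
    exacts [.inl ⟨hy, hx, h.symm⟩, .inr ⟨hy, hx, h.symm⟩]⟩

section restrict

variable {M : G.Subgraph} {s : Set V} (hs : ∀ ⦃x y⦄, M.Adj x y → (x ∈ s ↔ y ∈ s))
include hs

lemma Subgraph.IsPerfectMatching.isPerfectMatching_restrictMatching (hM : M.IsPerfectMatching) :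
    (restrictMatching G M s).IsPerfectMatching := by
  refine Subgraph.isPerfectMatching_iff.mpr fun a => ?_
  obtain ⟨w, hw, hw_uniq⟩ := Subgraph.isPerfectMatching_iff.mp hM a.1
  exact ⟨⟨w, (hs hw).mp a.2⟩, hw, fun b hb => Subtype.ext (hw_uniq b.1 hb)⟩

lemma Subgraph.IsPerfectMatching.extendBy (hM : M.IsPerfectMatching)
    {N : (G.induce s).Subgraph} (hN : N.IsPerfectMatching) : (N.extendBy M).IsPerfectMatching := by
  refine Subgraph.isPerfectMatching_iff.mpr fun x => ?_
  by_cases hx : x ∈ s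
  · obtain ⟨w, hw, hw_uniq⟩ := Subgraph.isPerfectMatching_iff.mp hN ⟨x, hx⟩
    refine ⟨w.1, .inl ⟨hx, w.2, hw⟩, ?_⟩
    rintro y (⟨_, hy, h⟩ | ⟨hx', -, -⟩)
    exacts [congrArg Subtype.val (hw_uniq ⟨y, hy⟩ h), absurd hx hx']
  · obtain ⟨w, hw, hw_uniq⟩ := Subgraph.isPerfectMatching_iff.mp hM x
    refine ⟨w, .inr ⟨hx, fun hw' => hx ((hs hw).mpr hw'), hw⟩, ?_⟩
    rintro y (⟨hx', -, -⟩ | ⟨-, -, h⟩)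
    exacts [absurd hx' hx, hw_uniq y h]

lemma Subgraph.eq_restrictMatching_of_isPerfectMatching (hM : M.IsPerfectMatching)
    (huniq : ∀ N : G.Subgraph, N.IsPerfectMatching → N = M)
    {N : (G.induce s).Subgraph} (hN : N.IsPerfectMatching) : N = restrictMatching G M s := by
  have hext : N.extendBy M = M := huniq _ (hM.extendBy hs hN)
  refine Subgraph.ext (Set.eq_univ_of_forall hN.2) ?_
  ext a b
  change N.Adj a b ↔ M.Adj a b
  rw [← hext]
  simp [Subgraph.extendBy, a.2]

end restrict

end SimpleGraph

/-- Deleting a co-augmenting path from a bipartite graph with a unique perfect matching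
yields a bipartite graph with a unique perfect matching (the restriction of M). -/
theorem stmt2 {V : Type*} (G : SimpleGraph V) (hbip : G.Colorable 2)
    (M : G.Subgraph) (hM : M.IsPerfectMatching)
    (huniq : ∀ N : G.Subgraph, N.IsPerfectMatching → N = M)
    {u v : V} (p : G.Walk u v) (hp : IsCoAugmenting G M.edgeSet p) :
    (G.induce {x | x ∉ p.support}).Colorable 2 ∧
    (restrictMatching G M {x | x ∉ p.support}).IsPerfectMatching ∧
    ∀ N : (G.induce {x | x ∉ p.support}).Subgraph, N.IsPerfectMatching →
      N = restrictMatching G M {x | x ∉ p.support} := by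
  obtain ⟨-, hodd, halt⟩ := hp
  have hpartner : ∀ x ∈ p.support, ∃ y ∈ p.support, M.Adj x y :=
    p.exists_mem_support_adj_of_odd_length (p.length_edges ▸ hodd)
      fun i hi hi_even => by simpa using (halt ⟨i, hi⟩).mpr hi_even
  have hclosed : ∀ ⦃x y⦄, M.Adj x y → (x ∈ {x | x ∉ p.support} ↔ y ∈ {x | x ∉ p.support}) :=
    fun _ _ hxy => not_congr (hM.1.mem_iff_of_adj (s := {x | x ∈ p.support}) hpartner hxy)
  exact ⟨hbip.induce _, hM.isPerfectMatching_restrictMatching hclosed,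
    fun _ hN => Subgraph.eq_restrictMatching_of_isPerfectMatching hclosed hM huniq hN⟩
end

section
/- Let X be a unicyclic bipartite graph with a unique perfect matching. If X has more than two pegs, then between any two vertices of X there is at most one co-augmenting path. -/
open SimpleGraph
open scoped Classical

/-!
Two distinct paths with the same ends contain subpaths from some `a` to some `b` that together
form a cycle, and by unicyclicity this cycle has the edges and vertices of `c`. If both paths
alternate with respect to `M`, every vertex of that cycle other than `a` and `b` is covered by an
`M`-edge of the cycle, so a peg, being an `M`-edge off the cycle, must contain `a` or `b`. As `M` is
a matching, this leaves room for at most two pegs.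
-/

section

variable {V : Type*} {G : SimpleGraph V}

lemma SimpleGraph.Subgraph.IsMatching.eq_of_mem_edgeSet {M : G.Subgraph} (hM : M.IsMatching)
    {e f : Sym2 V} {z : V} (he : e ∈ M.edgeSet) (hf : f ∈ M.edgeSet) (hze : z ∈ e)
    (hzf : z ∈ f) : e = f := by
  obtain ⟨w, rfl⟩ := Sym2.mem_iff_exists.mp hze
  obtain ⟨w', rfl⟩ := Sym2.mem_iff_exists.mp hzf
  rw [hM.eq_of_adj_left (Subgraph.mem_edgeSet.mp he) (Subgraph.mem_edgeSet.mp hf)]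

namespace SimpleGraph.Walk

def IsAlternating (M : Set (Sym2 V)) {u v : V} (p : G.Walk u v) : Prop :=
  p.edges.IsChain fun e f => (e ∈ M ↔ f ∉ M)

variable {M : Set (Sym2 V)}

lemma IsAlternating.of_isSubwalk {u v u' v' : V} {p : G.Walk u v} {q : G.Walk u' v'}
    (hq : q.IsAlternating M) (h : p.IsSubwalk q) : p.IsAlternating M :=
  hq.infix h.edges_isInfix

lemma IsAlternating.exists_mem_edges {u v z : V} {p : G.Walk u v} (hp : p.IsAlternating M)
    (hz : z ∈ p.support) (hzu : z ≠ u) (hzv : z ≠ v) : ∃ e ∈ p.edges, e ∈ M ∧ z ∈ e := by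
  induction p with
  | nil => exact (hzu (by simpa using hz)).elim
  | @cons u w v _ p ih =>
    have hzp : z ∈ p.support := by simpa [hzu] using hz
    by_cases hzw : z = w
    · subst hzw
      cases p with
      | nil => exact (hzv rfl).elim
      | @cons _ w' _ _ p =>
        have halt : s(u, z) ∈ M ↔ s(z, w') ∉ M := (List.isChain_cons_cons.mp hp).1
        by_cases huz : s(u, z) ∈ M
        · exact ⟨s(u, z), by simp, huz, Sym2.mem_mk_right _ _⟩
        · exact ⟨s(z, w'), by simp, not_not.mp (mt halt.mpr huz), Sym2.mem_mk_left _ _⟩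
    · obtain ⟨e, he, heM, hze⟩ := ih hp.tail hzp hzw hzv
      exact ⟨e, List.mem_cons_of_mem _ he, heM, hze⟩

lemma IsAlternating.exists_mem_edges_append_reverse {a b z : V} {p q : G.Walk a b}
    (hp : p.IsAlternating M) (hq : q.IsAlternating M) (hz : z ∈ (p.append q.reverse).support)
    (hza : z ≠ a) (hzb : z ≠ b) : ∃ e ∈ (p.append q.reverse).edges, e ∈ M ∧ z ∈ e := by
  simp only [mem_support_append_iff, support_reverse, List.mem_reverse] at hz
  simp only [edges_append, edges_reverse, List.mem_append, List.mem_reverse]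
  rcases hz with hz | hz
  · obtain ⟨e, he, heM, hze⟩ := hp.exists_mem_edges hz hza hzb
    exact ⟨e, Or.inl he, heM, hze⟩
  · obtain ⟨e, he, heM, hze⟩ := hq.exists_mem_edges hz hza hzb
    exact ⟨e, Or.inr he, heM, hze⟩

end SimpleGraph.Walk

lemma IsCoAugmenting.isAlternating {M : Set (Sym2 V)} {u v : V} {p : G.Walk u v}
    (hp : IsCoAugmenting G M p) : p.IsAlternating M :=
  List.isChain_iff_getElem.mpr fun i hi => by
    have hi₀ := hp.2.2 ⟨i, by omega⟩
    have hi₁ := hp.2.2 ⟨i + 1, hi⟩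
    simp only [List.get_eq_getElem] at hi₀ hi₁
    rw [hi₀, hi₁, Nat.even_add_one]
    tauto

namespace IsUnicyclic

variable {u v : V} {c : G.Walk u u} {d : G.Walk v v}

lemma mem_edges_iff (hG : IsUnicyclic G) (hc : c.IsCycle) (hd : d.IsCycle) {e : Sym2 V} :
    e ∈ c.edges ↔ e ∈ d.edges :=
  Set.ext_iff.mp (hG.2.2 u v c d hc hd) e

lemma mem_support_iff (hG : IsUnicyclic G) (hc : c.IsCycle) (hd : d.IsCycle) {z : V} :
    z ∈ c.support ↔ z ∈ d.support := by
  rw [Walk.mem_support_iff_exists_mem_edges_of_not_nil hc.not_nil,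
    Walk.mem_support_iff_exists_mem_edges_of_not_nil hd.not_nil]
  simp only [hG.mem_edges_iff hc hd]

end IsUnicyclic

section Pegs

variable {M : G.Subgraph} {u a b : V} {c : G.Walk u u}

lemma IsPeg.mem_or_mem (hM : M.IsMatching)
    (hcov : ∀ z ∈ c.support, z ≠ a → z ≠ b → ∃ f ∈ c.edges, f ∈ M.edgeSet ∧ z ∈ f)
    {e : Sym2 V} (he : IsPeg G M c e) : a ∈ e ∨ b ∈ e := by
  obtain ⟨heM, hec, z, hzc, hze⟩ := he
  by_contra! hab
  obtain ⟨f, hfc, hfM, hzf⟩ :=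
    hcov z hzc (fun h => hab.1 (h ▸ hze)) (fun h => hab.2 (h ▸ hze))
  exact hec (hM.eq_of_mem_edgeSet hfM heM hzf hze ▸ hfc)

lemma not_exists_three_pegs (hM : M.IsMatching)
    (hcov : ∀ z ∈ c.support, z ≠ a → z ≠ b → ∃ f ∈ c.edges, f ∈ M.edgeSet ∧ z ∈ f) :
    ¬ ∃ e₁ e₂ e₃ : Sym2 V, e₁ ≠ e₂ ∧ e₁ ≠ e₃ ∧ e₂ ≠ e₃ ∧
      IsPeg G M c e₁ ∧ IsPeg G M c e₂ ∧ IsPeg G M c e₃ := by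
  rintro ⟨e₁, e₂, e₃, h₁₂, h₁₃, h₂₃, he₁, he₂, he₃⟩
  have heq {e e' : Sym2 V} (he : IsPeg G M c e) (he' : IsPeg G M c e')
      (hsame : (a ∈ e ∧ a ∈ e') ∨ (b ∈ e ∧ b ∈ e')) : e = e' := by
    rcases hsame with ⟨h, h'⟩ | ⟨h, h'⟩ <;> exact hM.eq_of_mem_edgeSet he.1 he'.1 h h'
  rcases he₁.mem_or_mem hM hcov with h₁ | h₁ <;>
  rcases he₂.mem_or_mem hM hcov with h₂ | h₂ <;>
  rcases he₃.mem_or_mem hM hcov with h₃ | h₃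
  all_goals first
    | exact h₁₂ (heq he₁ he₂ (by tauto))
    | exact h₁₃ (heq he₁ he₃ (by tauto))
    | exact h₂₃ (heq he₂ he₃ (by tauto))

end Pegs

theorem IsUnicyclic.eq_of_isAlternating (hG : IsUnicyclic G) {M : G.Subgraph}
    (hM : M.IsMatching) {u : V} {c : G.Walk u u} (hc : c.IsCycle)
    (hpegs : ∃ e₁ e₂ e₃ : Sym2 V, e₁ ≠ e₂ ∧ e₁ ≠ e₃ ∧ e₂ ≠ e₃ ∧
      IsPeg G M c e₁ ∧ IsPeg G M c e₂ ∧ IsPeg G M c e₃)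
    {x y : V} {p q : G.Walk x y} (hp : p.IsPath) (hq : q.IsPath)
    (hpM : p.IsAlternating M.edgeSet) (hqM : q.IsAlternating M.edgeSet) : p = q := by
  by_contra hpq
  obtain ⟨a, b, p', q', hp', hq', hC⟩ := hp.exists_isCycle_of_ne hq hpq
  refine not_exists_three_pegs (a := a) (b := b) hM (fun z hz hza hzb => ?_) hpegs
  obtain ⟨f, hf, hfM, hzf⟩ := (hpM.of_isSubwalk hp').exists_mem_edges_append_reverse
    (hqM.of_isSubwalk hq') ((hG.mem_support_iff hC hc).mpr hz) hza hzb
  exact ⟨f, (hG.mem_edges_iff hC hc).mp hf, hfM, hzf⟩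

end

theorem stmt13_general {V : Type*} (G : SimpleGraph V) (hunic : IsUnicyclic G)
    (M : G.Subgraph) (hM : M.IsPerfectMatching)
    {u : V} (c : G.Walk u u) (hc : c.IsCycle)
    (hpegs : ∃ e1 e2 e3 : Sym2 V, e1 ≠ e2 ∧ e1 ≠ e3 ∧ e2 ≠ e3 ∧
      IsPeg G M c e1 ∧ IsPeg G M c e2 ∧ IsPeg G M c e3) :
    ∀ (x y : V) (p q : G.Walk x y),
      IsCoAugmenting G M.edgeSet p → IsCoAugmenting G M.edgeSet q → p = q := by
  intro x y p q hp hq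
  exact hunic.eq_of_isAlternating hM.1 hc hpegs hp.1 hq.1 hp.isAlternating hq.isAlternating

/-- In a unicyclic bipartite graph with a unique perfect matching and more than two pegs,
any two vertices are joined by at most one co-augmenting path. -/
theorem stmt13 {V : Type*} (G : SimpleGraph V) (hunic : IsUnicyclic G)
    (hbip : G.Colorable 2)
    (M : G.Subgraph) (hM : M.IsPerfectMatching)
    (huniq : ∀ N : G.Subgraph, N.IsPerfectMatching → N = M)
    {u : V} (c : G.Walk u u) (hc : c.IsCycle)
    (hpegs : ∃ e1 e2 e3 : Sym2 V, e1 ≠ e2 ∧ e1 ≠ e3 ∧ e2 ≠ e3 ∧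
      IsPeg G M c e1 ∧ IsPeg G M c e2 ∧ IsPeg G M c e3) :
    ∀ (x y : V) (p q : G.Walk x y),
      IsCoAugmenting G M.edgeSet p → IsCoAugmenting G M.edgeSet q → p = q :=
  stmt13_general G hunic M hM c hc hpegs
end
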